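/- Let M_{s,t} := I_T (I_T'ΨI_T)^{-1} I_T' Ψ with Ψ = I − P̂P̂', and suppose ‖I_T'P̂‖ ≤ δ < 1 and sinθ_max(P̂,P) ≤ Δ. Then q := ‖M_{s,t} P‖ ≤ Δ/(1 − δ²). -/

import Mathlib

open Matrix MeasureTheory

noncomputable def spNorm {m n : Type*} [Fintype m] [Fintype n] [DecidableEq n]
    (A : Matrix m n ℝ) : ℝ :=
  ‖LinearMap.toContinuousLinearMap (Matrix.toEuclideanLin A)‖

noncomputable def vnorm {n : Type*} [Fintype n] (x : n → ℝ) : ℝ :=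
  Real.sqrt (∑ i, x i ^ 2)

def selMat {n : ℕ} (T : Finset (Fin n)) : Matrix (Fin n) {i // i ∈ T} ℝ :=
  fun i j => if i = (j : Fin n) then 1 else 0

/-!
Write `S = I_T` and `Ψ = 1 - P̂P̂ᵀ`. Since `SᵀS = 1`, the middle block is
`SᵀΨS = 1 - CCᵀ` with `C = SᵀP̂`, and `‖CCᵀ‖ ≤ δ² < 1`, so the Neumann series bounds
`‖(SᵀΨS)⁻¹‖ ≤ 1/(1 - δ²)`. As `S` and `Sᵀ` are contractions,
`‖S (SᵀΨS)⁻¹ SᵀΨP‖ ≤ ‖(SᵀΨS)⁻¹‖ ‖ΨP‖ ≤ Δ/(1 - δ²)`.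
-/

lemma norm_ringInverse_one_sub_le {R : Type*} [NormedRing R] [HasSummableGeomSeries R]
    (h1 : ‖(1 : R)‖ ≤ 1) {x : R} (hx : ‖x‖ < 1) : ‖Ring.inverse (1 - x)‖ ≤ (1 - ‖x‖)⁻¹ := by
  rw [← geom_series_eq_inverse x hx]
  linarith [tsum_geometric_le_of_norm_lt_one x hx]

lemma selMat_transpose_mul_selMat {n : ℕ} (T : Finset (Fin n)) :
    (selMat T)ᵀ * selMat T = 1 := by
  ext j k
  simp only [selMat, mul_apply, transpose_apply, one_apply, ite_mul, one_mul, zero_mul,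
    Finset.sum_ite_eq', Finset.mem_univ, if_true, Subtype.ext_iff]

open scoped Matrix.Norms.L2Operator

lemma spNorm_eq_l2_opNorm {m n : Type*} [Fintype m] [Fintype n] [DecidableEq n]
    (A : Matrix m n ℝ) : spNorm A = ‖A‖ :=
  rfl

namespace Matrix

variable {m n l : Type*}

lemma l2_opNorm_one_le {𝕜 : Type*} [RCLike 𝕜] [Fintype n] [DecidableEq n] :
    ‖(1 : Matrix n n 𝕜)‖ ≤ 1 := by
  rw [← diagonal_one, l2_opNorm_diagonal]
  exact pi_norm_le_iff_of_nonneg zero_le_one |>.mpr fun _ ↦ norm_one.le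

lemma l2_opNorm_transpose [Fintype m] [Fintype n] [DecidableEq m] [DecidableEq n]
    (A : Matrix m n ℝ) : ‖Aᵀ‖ = ‖A‖ := by
  rw [← conjTranspose_eq_transpose_of_trivial, l2_opNorm_conjTranspose]

lemma l2_opNorm_le_one_of_transpose_mul_self_eq_one [Fintype m] [Fintype n] [DecidableEq n]
    {S : Matrix m n ℝ} (hS : Sᵀ * S = 1) : ‖S‖ ≤ 1 := by
  have h := l2_opNorm_conjTranspose_mul_self S
  rw [conjTranspose_eq_transpose_of_trivial, hS] at h
  nlinarith [norm_nonneg S, l2_opNorm_one_le (n := n) (𝕜 := ℝ)]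

lemma l2_opNorm_inv_one_sub_le [Fintype n] [DecidableEq n] {X : Matrix n n ℝ} (hX : ‖X‖ < 1) :
    ‖(1 - X)⁻¹‖ ≤ (1 - ‖X‖)⁻¹ := by
  rw [nonsing_inv_eq_ringInverse]
  exact norm_ringInverse_one_sub_le l2_opNorm_one_le hX

lemma l2_opNorm_inv_one_sub_mul_transpose_le [Fintype m] [Fintype n] [DecidableEq m]
    [DecidableEq n] {C : Matrix m n ℝ} {δ : ℝ} (hC : ‖C‖ ≤ δ) (hδ : δ < 1) :
    ‖(1 - C * Cᵀ)⁻¹‖ ≤ (1 - δ ^ 2)⁻¹ := by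
  have hCCt : ‖C * Cᵀ‖ ≤ δ ^ 2 := by
    calc ‖C * Cᵀ‖ ≤ ‖C‖ * ‖Cᵀ‖ := l2_opNorm_mul C Cᵀ
      _ = ‖C‖ ^ 2 := by rw [l2_opNorm_transpose, sq]
      _ ≤ δ ^ 2 := pow_le_pow_left₀ (norm_nonneg C) hC 2
  have hδ2 : δ ^ 2 < 1 := by nlinarith [norm_nonneg C]
  calc ‖(1 - C * Cᵀ)⁻¹‖ ≤ (1 - ‖C * Cᵀ‖)⁻¹ := l2_opNorm_inv_one_sub_le (hCCt.trans_lt hδ2)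
    _ ≤ (1 - δ ^ 2)⁻¹ := inv_anti₀ (by linarith) (by linarith)

lemma transpose_mul_one_sub_mul_transpose_mul [Fintype m] [Fintype l] [DecidableEq m]
    [DecidableEq n] {S : Matrix m n ℝ} (hS : Sᵀ * S = 1) (Q : Matrix m l ℝ) :
    Sᵀ * (1 - Q * Qᵀ) * S = 1 - (Sᵀ * Q) * (Sᵀ * Q)ᵀ := by
  simp only [Matrix.mul_sub, Matrix.sub_mul, Matrix.mul_one, hS, transpose_mul,
    transpose_transpose, Matrix.mul_assoc]

lemma l2_opNorm_mul_mul_transpose_mul_le [Fintype m] [Fintype n] [Fintype l]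
    [DecidableEq m] [DecidableEq n] [DecidableEq l] {S : Matrix m n ℝ}
    (hS : Sᵀ * S = 1) (B : Matrix n n ℝ) (A : Matrix m l ℝ) :
    ‖S * B * Sᵀ * A‖ ≤ ‖B‖ * ‖A‖ := by
  have hS1 : ‖S‖ ≤ 1 := l2_opNorm_le_one_of_transpose_mul_self_eq_one hS
  have hSt1 : ‖Sᵀ‖ ≤ 1 := (l2_opNorm_transpose S).trans_le hS1
  calc ‖S * B * Sᵀ * A‖ ≤ ‖S‖ * ‖B‖ * ‖Sᵀ‖ * ‖A‖ := by
        grw [l2_opNorm_mul, l2_opNorm_mul, l2_opNorm_mul]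
    _ ≤ 1 * ‖B‖ * 1 * ‖A‖ := by gcongr
    _ = ‖B‖ * ‖A‖ := by ring

end Matrix

theorem stmt13_general (n r : ℕ) (δ Δ : ℝ) (hδ : δ < 1)
    (P Phat : Matrix (Fin n) (Fin r) ℝ)
    (T : Finset (Fin n))
    (hP : spNorm ((selMat T)ᵀ * Phat) ≤ δ)
    (hΔ : spNorm (((1 : Matrix (Fin n) (Fin n) ℝ) - Phat * Phatᵀ) * P) ≤ Δ) :
    spNorm ((selMat T *
      ((selMat T)ᵀ * ((1 : Matrix (Fin n) (Fin n) ℝ) - Phat * Phatᵀ) * selMat T)⁻¹ *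
      (selMat T)ᵀ * ((1 : Matrix (Fin n) (Fin n) ℝ) - Phat * Phatᵀ)) * P)
      ≤ Δ / (1 - δ ^ 2) := by
  have hS := selMat_transpose_mul_selMat T
  rw [spNorm_eq_l2_opNorm] at hP hΔ ⊢
  have hinv := l2_opNorm_inv_one_sub_mul_transpose_le hP hδ
  rw [transpose_mul_one_sub_mul_transpose_mul hS, Matrix.mul_assoc _ _ P, div_eq_inv_mul]
  calc _ ≤ _ := l2_opNorm_mul_mul_transpose_mul_le hS _ _
    _ ≤ (1 - δ ^ 2)⁻¹ * Δ := mul_le_mul hinv hΔ (norm_nonneg _) ((norm_nonneg _).trans hinv)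

/-- Bound on the noise-dependency norm q of the sparse recovery error matrix. -/
theorem stmt13 (n r : ℕ) (δ Δ : ℝ) (hδ0 : 0 ≤ δ) (hδ : δ < 1)
    (P Phat : Matrix (Fin n) (Fin r) ℝ)
    (horthP : Pᵀ * P = 1) (horthPhat : Phatᵀ * Phat = 1)
    (T : Finset (Fin n))
    (hP : spNorm ((selMat T)ᵀ * Phat) ≤ δ)
    (hΔ : spNorm (((1 : Matrix (Fin n) (Fin n) ℝ) - Phat * Phatᵀ) * P) ≤ Δ) :
    spNorm ((selMat T *
      ((selMat T)ᵀ * ((1 : Matrix (Fin n) (Fin n) ℝ) - Phat * Phatᵀ) * selMat T)⁻¹ *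
      (selMat T)ᵀ * ((1 : Matrix (Fin n) (Fin n) ℝ) - Phat * Phatᵀ)) * P)
      ≤ Δ / (1 - δ ^ 2) :=
  stmt13_general n r δ Δ hδ P Phat T hP hΔ
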